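/- arXiv:2301.13417 — 2 statements merged into one kernel-verified Lean document; each statement's English description precedes it below -/
import Mathlib

section
/- For every a⁰ ∈ Δ(2), the ten brackets B_{x^c}, c ∈ Δ(3), are linearly independent: if λ = (λ_c)_{c∈Δ(3)} ∈ ℂ^{Δ(3)} satisfies Σ_{c∈Δ(3)} λ_c·B_{x^c}(f,g) = 0 for all f, g ∈ R, then λ_c = 0 for all c ∈ Δ(3). Here B_{x^c} := B_{F^{(c)}} with F^{(c)} ∈ ℂ^{Δ(3)} the coefficient vector of the monomial x^c (F^{(c)}_{c'} = 1 if c' = c and 0 otherwise). -/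
/-- `Δ(n)` for `n ≥ 0`, as a `Finset` of exponent vectors in `ℤ³`:
triples of nonnegative integers summing to `n`. -/
noncomputable def DeltaFin (n : ℕ) : Finset (Fin 3 → ℤ) :=
  (Finset.Icc (fun _ => (0 : ℤ)) (fun _ => (n : ℤ))).filter
    (fun a => a 0 + a 1 + a 2 = (n : ℤ))

/-- The quantity `ρ̃(a,b,c,a',b')`. -/
def rhoT (a b c a' b' : Fin 3 → ℤ) : ℤ :=
  if a' 0 ≤ a 0 - 1 ∧ a 1 - 1 < a' 1 ∧ a' 1 ≤ a 1 + b 1 - 1 ∧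
      a 2 + b 2 < a' 2 + 1 ∧ a' 2 + 1 ≤ c 2 + a 2 + b 2 ∧
      a' 0 + b' 0 = a 0 + b 0 + c 0 - 1 ∧ a' 1 + b' 1 = a 1 + b 1 + c 1 - 1
  then 1 else 0

/-- The coefficient `Σ_σ −sgn(σ)·ρ̃(σ(a,b,c), a', b')`. -/
def sgnSum (a b c a' b' : Fin 3 → ℤ) : ℤ :=
  ∑ σ : Equiv.Perm (Fin 3),
    (-(Equiv.Perm.sign σ : ℤ)) *
      rhoT (![a, b, c] (σ 0)) (![a, b, c] (σ 1)) (![a, b, c] (σ 2)) a' b'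

/-- The element `{a,b}_c` of `S²(V*)`, realized inside the symmetric algebra
(polynomial ring) on the basis `{u_a : a ∈ Δ(2)}`. -/
noncomputable def brkt (a b c : Fin 3 → ℤ) : MvPolynomial (DeltaFin 2) ℂ :=
  ∑ a' : DeltaFin 2, ∑ b' : DeltaFin 2,
    (sgnSum a b c a'.1 b'.1 : ℂ) • (MvPolynomial.X a' * MvPolynomial.X b')

/-- `b_F(u_a,u_b) = Σ_{c ∈ Δ(3)} F_c {a,b}_c`. -/
noncomputable def bF (F : DeltaFin 3 → ℂ) (a b : Fin 3 → ℤ) :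
    MvPolynomial (DeltaFin 2) ℂ :=
  ∑ c : DeltaFin 3, F c • brkt a b c.1

/-- The chart polynomial ring `R = ℂ[y_a : a ∈ Δ(2), a ≠ a⁰]` in 5 variables. -/
noncomputable abbrev ChartRing (a0 : Fin 3 → ℤ) :=
  MvPolynomial ((DeltaFin 2).erase a0) ℂ

/-- The substitution `q ↦ q̄`: `u_{a⁰} ↦ 1` and `u_a ↦ y_a` for `a ≠ a⁰`. -/
noncomputable def chartBar (a0 : Fin 3 → ℤ) (q : MvPolynomial (DeltaFin 2) ℂ) :
    ChartRing a0 :=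
  MvPolynomial.aeval
    (fun a : DeltaFin 2 =>
      if h : a.1 = a0 then 1
      else MvPolynomial.X ⟨a.1, Finset.mem_erase.mpr ⟨h, a.2⟩⟩) q

/-- `P_F(a,b) = b_F(u_a,u_b)‾ − y_b·(b_F(u_a,u_{a⁰}))‾ − y_a·(b_F(u_{a⁰},u_b))‾`. -/
noncomputable def PF (a0 : Fin 3 → ℤ) (F : DeltaFin 3 → ℂ)
    (a b : (DeltaFin 2).erase a0) : ChartRing a0 :=
  chartBar a0 (bF F a.1 b.1) - MvPolynomial.X b * chartBar a0 (bF F a.1 a0) -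
    MvPolynomial.X a * chartBar a0 (bF F a0 b.1)

/-- The bracket `B_F(f,g) = Σ_{a,b ≠ a⁰} P_F(a,b)·(∂f/∂y_a)(∂g/∂y_b)` on the
affine chart `{u_{a⁰} ≠ 0}` of `ℙ⁵`. -/
noncomputable def BF (a0 : Fin 3 → ℤ) (F : DeltaFin 3 → ℂ)
    (f g : ChartRing a0) : ChartRing a0 :=
  ∑ a : (DeltaFin 2).erase a0, ∑ b : (DeltaFin 2).erase a0,
    PF a0 F a b * MvPolynomial.pderiv a f * MvPolynomial.pderiv b g

/-- The coefficient vector `F^{(c)} ∈ ℂ^{Δ(3)}` of the monomial `x^c`: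
`F^{(c)}_{c'} = 1` if `c' = c` and `0` otherwise. -/
noncomputable def Fmono (c : Fin 3 → ℤ) : DeltaFin 3 → ℂ :=
  fun c' => if c'.1 = c then 1 else 0

/-!
Exponent vectors are graded by the torus weight `x ↦ (x 0, x 1)`: `{a,b}_c` only involves
monomials `u_{a'} u_{b'}` with `a' + b' = a + b + c - (1,1,1)`. Giving `y_x` the weight of
`x - a⁰` on the chart, `P_{x^c}(a,b)` is therefore weighted homogeneous of a degree that
determines `c`, so a vanishing combination `∑ λ_c P_{x^c}(a,b) = ∑ λ_c B_{x^c}(y_a, y_b)` vanishes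
term by term. It remains to find, for each `a⁰`, a pair `(a,b)` with all ten `P_{x^c}(a,b)`
nonzero; their values at `y = 1` exhibit one by a finite computation.
-/

open MvPolynomial

namespace MvPolynomial.IsWeightedHomogeneous

variable {R M σ ι : Type*} [CommSemiring R] [AddCommMonoid M] {w : σ → M}

theorem eq_zero_of_sum_eq_zero {s : Finset ι} {φ : ι → MvPolynomial σ R} {m : ι → M}
    (hm : Set.InjOn m s) (hφ : ∀ i ∈ s, IsWeightedHomogeneous w (φ i) (m i))
    (hsum : ∑ i ∈ s, φ i = 0) {i : ι} (hi : i ∈ s) : φ i = 0 := by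
  classical
  have := congrArg (weightedHomogeneousComponent w (m i)) hsum
  rwa [map_sum, map_zero, Finset.sum_eq_single_of_mem i hi
      (fun j hj hji => (hφ j hj).weightedHomogeneousComponent_ne _ fun h => hji (hm hj hi h.symm)),
    (hφ i hi).weightedHomogeneousComponent_same] at this

end MvPolynomial.IsWeightedHomogeneous

def torusWeight (x : Fin 3 → ℤ) : ℤ × ℤ := (x 0, x 1)

@[simp]
theorem torusWeight_add (x y : Fin 3 → ℤ) : torusWeight (x + y) = torusWeight x + torusWeight y :=
  rfl

theorem torusWeight_injOn (n : ℕ) : Set.InjOn torusWeight (DeltaFin n) := by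
  intro x hx y hy hxy
  simp only [DeltaFin, Finset.coe_filter, Set.mem_ofPred_eq] at hx hy
  simp only [torusWeight, Prod.mk.injEq] at hxy
  funext i
  fin_cases i <;> simp <;> omega

theorem torusWeight_add_of_rhoT_ne_zero {a b c a' b' : Fin 3 → ℤ} (h : rhoT a b c a' b' ≠ 0) :
    torusWeight a' + torusWeight b' = torusWeight (a + b + c) - (1, 1) := by
  unfold rhoT at h
  split_ifs at h with hρ
  · simp only [torusWeight, Pi.add_apply, Prod.mk_add_mk, Prod.mk_sub_mk, Prod.mk.injEq]
    omega
  · exact absurd rfl h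

theorem torusWeight_add_of_sgnSum_ne_zero {a b c a' b' : Fin 3 → ℤ} (h : sgnSum a b c a' b' ≠ 0) :
    torusWeight a' + torusWeight b' = torusWeight (a + b + c) - (1, 1) := by
  obtain ⟨σ, -, hσ⟩ := Finset.exists_ne_zero_of_sum_ne_zero h
  rw [torusWeight_add_of_rhoT_ne_zero (right_ne_zero_of_mul hσ)]
  congr 2
  simpa [Fin.sum_univ_three, add_assoc] using Equiv.sum_comp σ ![a, b, c]

def chartWeight (a0 : Fin 3 → ℤ) (x : (DeltaFin 2).erase a0) : ℤ × ℤ :=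
  torusWeight x - torusWeight a0

def chartDegree (a0 a b c : Fin 3 → ℤ) : ℤ × ℤ :=
  torusWeight (a + b + c) - (1, 1) - 2 • torusWeight a0

theorem isWeightedHomogeneous_chartBar_X (a0 : Fin 3 → ℤ) (x : DeltaFin 2) :
    (chartBar a0 (X x)).IsWeightedHomogeneous (chartWeight a0)
      (torusWeight x - torusWeight a0) := by
  rw [chartBar, aeval_X]
  split_ifs with hx
  · rw [hx, sub_self]
    exact isWeightedHomogeneous_one (R := ℂ) _
  · exact isWeightedHomogeneous_X ℂ _ _

theorem isWeightedHomogeneous_chartBar_brkt (a0 a b c : Fin 3 → ℤ) :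
    (chartBar a0 (brkt a b c)).IsWeightedHomogeneous (chartWeight a0) (chartDegree a0 a b c) := by
  rw [chartBar, brkt, map_sum]
  refine IsWeightedHomogeneous.sum _ _ _ fun a' _ => ?_
  rw [map_sum]
  refine IsWeightedHomogeneous.sum _ _ _ fun b' _ => ?_
  rw [map_smul, map_mul, ← chartBar, ← chartBar]
  by_cases h : sgnSum a b c a' b' = 0
  · rw [h, Int.cast_zero, zero_smul]
    exact isWeightedHomogeneous_zero _ _ _
  · rw [chartDegree, ← torusWeight_add_of_sgnSum_ne_zero h, two_nsmul]
    convert ((isWeightedHomogeneous_chartBar_X a0 a').mul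
      (isWeightedHomogeneous_chartBar_X a0 b')).C_mul (sgnSum a b c a' b' : ℂ) using 1
    · rw [smul_eq_C_mul]
    · abel

theorem bF_Fmono (c : DeltaFin 3) (a b : Fin 3 → ℤ) : bF (Fmono c) a b = brkt a b c := by
  simp [bF, Fmono]

theorem isWeightedHomogeneous_PF_Fmono (a0 : Fin 3 → ℤ) (c : DeltaFin 3)
    (a b : (DeltaFin 2).erase a0) :
    (PF a0 (Fmono c) a b).IsWeightedHomogeneous (chartWeight a0) (chartDegree a0 a b c) := by
  rw [PF, bF_Fmono, bF_Fmono, bF_Fmono]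
  refine ((isWeightedHomogeneous_chartBar_brkt a0 a b c).sub ?_).sub ?_
  · have hdeg : chartDegree a0 a b c = chartWeight a0 b + chartDegree a0 a a0 c := by
      simp only [chartDegree, chartWeight, torusWeight_add]
      abel
    rw [hdeg]
    exact (isWeightedHomogeneous_X ℂ _ b).mul (isWeightedHomogeneous_chartBar_brkt a0 a a0 c)
  · have hdeg : chartDegree a0 a b c = chartWeight a0 a + chartDegree a0 a0 b c := by
      simp only [chartDegree, chartWeight, torusWeight_add]
      abel
    rw [hdeg]
    exact (isWeightedHomogeneous_X ℂ _ a).mul (isWeightedHomogeneous_chartBar_brkt a0 a0 b c)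

theorem BF_X_X (a0 : Fin 3 → ℤ) (F : DeltaFin 3 → ℂ) (a b : (DeltaFin 2).erase a0) :
    BF a0 F (X a) (X b) = PF a0 F a b := by
  simp [BF, pderiv_X, Pi.single_apply]

theorem smul_PF_Fmono_eq_zero_of_sum_eq_zero (a0 : Fin 3 → ℤ) (lam : DeltaFin 3 → ℂ)
    (a b : (DeltaFin 2).erase a0) (hsum : ∑ c : DeltaFin 3, lam c • PF a0 (Fmono c) a b = 0)
    (c : DeltaFin 3) : lam c • PF a0 (Fmono c) a b = 0 := by
  have hdeg : Set.InjOn (fun c : DeltaFin 3 => chartDegree a0 a b c)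
      (Finset.univ : Finset (DeltaFin 3)) := fun c _ c' _ h =>
    Subtype.ext (torusWeight_injOn 3 c.2 c'.2 (by simpa [chartDegree] using h))
  refine IsWeightedHomogeneous.eq_zero_of_sum_eq_zero (w := chartWeight a0) hdeg (fun c _ => ?_)
    hsum (Finset.mem_univ c)
  rw [smul_eq_C_mul]
  exact (isWeightedHomogeneous_PF_Fmono a0 c a b).C_mul _

noncomputable def brktTotal (a b c : Fin 3 → ℤ) : ℤ :=
  ∑ a' : DeltaFin 2, ∑ b' : DeltaFin 2, sgnSum a b c a' b'

theorem eval_one_chartBar (a0 : Fin 3 → ℤ) (q : MvPolynomial (DeltaFin 2) ℂ) :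
    eval 1 (chartBar a0 q) = eval 1 q := by
  change aeval 1 (aeval _ q) = aeval 1 q
  rw [aeval_eq_bind₁, aeval_bind₁]
  congr 2
  funext x
  split_ifs <;> simp

theorem eval_one_brkt (a b c : Fin 3 → ℤ) : eval 1 (brkt a b c) = brktTotal a b c := by
  simp [brkt, brktTotal, smul_eq_C_mul]

theorem eval_one_PF_Fmono (a0 : Fin 3 → ℤ) (c : DeltaFin 3) (a b : (DeltaFin 2).erase a0) :
    eval 1 (PF a0 (Fmono c) a b) = brktTotal a b c - brktTotal a a0 c - brktTotal a0 b c := by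
  simp [PF, bF_Fmono, eval_one_chartBar, eval_one_brkt]

theorem exists_brktTotal_ne_zero :
    ∀ a0 ∈ DeltaFin 2, ∃ a ∈ (DeltaFin 2).erase a0, ∃ b ∈ (DeltaFin 2).erase a0,
      ∀ c ∈ DeltaFin 3, brktTotal a b c - brktTotal a a0 c - brktTotal a0 b c ≠ 0 := by
  decide +kernel

theorem exists_PF_Fmono_ne_zero (a0 : Fin 3 → ℤ) (ha0 : a0 ∈ DeltaFin 2) :
    ∃ a b : (DeltaFin 2).erase a0, ∀ c : DeltaFin 3, PF a0 (Fmono c) a b ≠ 0 := by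
  obtain ⟨a, ha, b, hb, hab⟩ := exists_brktTotal_ne_zero a0 ha0
  refine ⟨⟨a, ha⟩, ⟨b, hb⟩, fun c h => hab c c.2 ?_⟩
  have := eval_one_PF_Fmono a0 c ⟨a, ha⟩ ⟨b, hb⟩
  rw [h, map_zero] at this
  exact_mod_cast this.symm

/-- for every `a⁰ ∈ Δ(2)`, the ten brackets `B_{x^c}`,
`c ∈ Δ(3)`, are linearly independent: if `Σ_c λ_c·B_{x^c}(f,g) = 0` for all
`f, g ∈ R`, then all `λ_c = 0`. -/
theorem BF_linearly_independent :
    ∀ a0 ∈ DeltaFin 2, ∀ lam : DeltaFin 3 → ℂ,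
      (∀ f g : ChartRing a0,
        ∑ c : DeltaFin 3, lam c • BF a0 (Fmono c.1) f g = 0) →
      ∀ c : DeltaFin 3, lam c = 0 := by
  intro a0 ha0 lam H c
  obtain ⟨a, b, hab⟩ := exists_PF_Fmono_ne_zero a0 ha0
  have hsum := H (X a) (X b)
  simp only [BF_X_X] at hsum
  exact (smul_eq_zero.mp (smul_PF_Fmono_eq_zero_of_sum_eq_zero a0 lam a b hsum c)).resolve_right
    (hab c)
end

section
/- It is not true that for every F ∈ ℂ^{Δ(3)} the bracket {·,·}_F on the polynomial ring P = ℂ[u_a : a ∈ Δ(2)] in 6 variables satisfies the Jacobi identity: there exist F ∈ ℂ^{Δ(3)} and f, g, h ∈ P such that {f,{g,h}_F}_F + {g,{h,f}_F}_F + {h,{f,g}_F}_F ≠ 0. (The explicit formulas define Poisson brackets only on the projective space P⁵, not on the algebra of polynomials in 6 variables.) -/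
/-- The skew-symmetric biderivation `{f,g}_F` on `P = ℂ[u_a : a ∈ Δ(2)]`. -/
noncomputable def pBracket (F : DeltaFin 3 → ℂ)
    (f g : MvPolynomial (DeltaFin 2) ℂ) : MvPolynomial (DeltaFin 2) ℂ :=
  ∑ a : DeltaFin 2, ∑ b : DeltaFin 2,
    bF F a.1 b.1 * MvPolynomial.pderiv a f * MvPolynomial.pderiv b g

/-!
Take `F = δ_(1,1,1)` and the coordinates `u_(0,0,2), u_(0,1,1), u_(0,2,0)`. Since `{u_a, u_b}_F` is
the quadratic form `b_F(u_a, u_b)`, the Jacobiator of three coordinates is the cubic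
`Σ_b (b_F(u_i, u_b) ∂_b b_F(u_j, u_k) + cyclic)`; for this choice it equals `u_(0,1,1)³`.
Evaluating at the vertex `u = e_(0,1,1)` reduces everything to a finite sum of the integers
`sgnSum`, which is `1`.
-/

open MvPolynomial

section QuadraticForm

variable {σ R : Type*} [Fintype σ] [DecidableEq σ] [CommRing R]

theorem eval_single_sum_smul_X_mul_X (C : σ → σ → R) (v : σ) :
    eval (Pi.single v 1) (∑ a, ∑ b, C a b • (X a * X b)) = C v v := by
  simp [smul_eq_C_mul, Pi.single_apply]

theorem eval_single_pderiv_sum_smul_X_mul_X (C : σ → σ → R) (v w : σ) :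
    eval (Pi.single v 1) (pderiv w (∑ a, ∑ b, C a b • (X a * X b))) = C v w + C w v := by
  simp [smul_eq_C_mul, Pi.single_apply, pderiv_X, mul_add, Finset.sum_add_distrib]

end QuadraticForm

section Bracket

variable (F : DeltaFin 3 → ℂ)

theorem pBracket_X_left (i : DeltaFin 2) (g : MvPolynomial (DeltaFin 2) ℂ) :
    pBracket F (X i) g = ∑ b, bF F i.1 b.1 * pderiv b g := by
  simp [pBracket, pderiv_X, Pi.single_apply]

theorem pBracket_X_X (i j : DeltaFin 2) : pBracket F (X i) (X j) = bF F i.1 j.1 := by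
  simp [pBracket_X_left, pderiv_X, Pi.single_apply]

theorem jacobiator_X (i j k : DeltaFin 2) :
    pBracket F (X i) (pBracket F (X j) (X k)) + pBracket F (X j) (pBracket F (X k) (X i)) +
        pBracket F (X k) (pBracket F (X i) (X j)) =
      ∑ b, (bF F i.1 b.1 * pderiv b (bF F j.1 k.1) + bF F j.1 b.1 * pderiv b (bF F k.1 i.1) +
        bF F k.1 b.1 * pderiv b (bF F i.1 j.1)) := by
  rw [pBracket_X_X, pBracket_X_X, pBracket_X_X]
  simp only [pBracket_X_left, Finset.sum_add_distrib]

theorem bF_single (c : DeltaFin 3) (a b : Fin 3 → ℤ) : bF (Pi.single c 1) a b = brkt a b c.1 := by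
  simp [bF, Pi.single_apply]

end Bracket

noncomputable def vertexJacobiator (c : Fin 3 → ℤ) (v i j k : DeltaFin 2) : ℤ :=
  ∑ w : DeltaFin 2,
    (sgnSum i w c v v * (sgnSum j k c v w + sgnSum j k c w v) +
      sgnSum j w c v v * (sgnSum k i c v w + sgnSum k i c w v) +
      sgnSum k w c v v * (sgnSum i j c v w + sgnSum i j c w v))

theorem eval_single_jacobiator_X (c : DeltaFin 3) (v i j k : DeltaFin 2) :
    eval (Pi.single v 1)
        (pBracket (Pi.single c 1) (X i) (pBracket (Pi.single c 1) (X j) (X k)) +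
          pBracket (Pi.single c 1) (X j) (pBracket (Pi.single c 1) (X k) (X i)) +
          pBracket (Pi.single c 1) (X k) (pBracket (Pi.single c 1) (X i) (X j))) =
      vertexJacobiator c v i j k := by
  rw [jacobiator_X, map_sum, vertexJacobiator]
  push_cast
  refine Finset.sum_congr rfl fun w _ => ?_
  simp only [bF_single, brkt, map_add, map_mul, eval_single_sum_smul_X_mul_X,
    eval_single_pderiv_sum_smul_X_mul_X]

/-- the brackets `{·,·}_F` on the polynomial ring in 6 variables
do NOT in general satisfy the Jacobi identity. -/
theorem exists_jacobi_failure_on_polynomial_ring :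
    ∃ (F : DeltaFin 3 → ℂ) (f g h : MvPolynomial (DeltaFin 2) ℂ),
      pBracket F f (pBracket F g h) + pBracket F g (pBracket F h f) +
        pBracket F h (pBracket F f g) ≠ 0 := by
  let c : DeltaFin 3 := ⟨![1, 1, 1], by decide⟩
  let i : DeltaFin 2 := ⟨![0, 0, 2], by decide⟩
  let j : DeltaFin 2 := ⟨![0, 1, 1], by decide⟩
  let k : DeltaFin 2 := ⟨![0, 2, 0], by decide⟩
  have hvalue : vertexJacobiator c j i j k = 1 := by decide
  refine ⟨Pi.single c 1, X i, X j, X k, fun hzero => ?_⟩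
  have := eval_single_jacobiator_X c j i j k
  rw [hzero, map_zero, hvalue] at this
  norm_num at this
end
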